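/- arXiv:1611.08370 — 7 statements merged into one kernel-verified Lean document; each statement's English description precedes it below -/
import Mathlib

section
/- Let σ be a permutation of Fin n. Then for every s ∈ ℂ with |s| < 1, exp(∑_{m=1}^{∞} (#Fix(σ^m)/m) · s^m) · det(I_n − s·P_σ) = 1; that is, the zeta function ζ_σ(s) = exp(∑_{m≥1} #Fix(σ^m)/m · s^m) has the determinant expression ζ_σ(s) = det(I_n − P_σ·s)^{−1}. -/
/-!
Write `N` for the number of points and `S_σ(s) = ∑ₙ #supp(σⁿ)/n · sⁿ`. Since
`#Fix(σⁿ) = N - #supp(σⁿ)`, the theorem amounts to `det(1 - s P_σ) = (1 - s)^N exp S_σ(s)`.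
Both sides are multiplicative over disjoint cycles: supports of powers of disjoint permutations
add up, and `(1 - s P_σ)(1 - s P_τ) = (1 - s)(1 - s P_{στ})` because `P_σ + P_τ = P_{στ} + 1`.
For a single `k`-cycle, `#supp(cⁿ)` is `k` unless `k ∣ n`, so `S_c(s) = -k log(1 - s) + log(1 - sᵏ)`,
while the Leibniz expansion of `det(1 - s P_c)` has only the two terms `τ = 1` and `τ = c`,
giving `(1 - s)^(N - k) (1 - sᵏ)`.
-/

open Matrix

open Finset

namespace Equiv.Perm

variable {α : Type*} [Fintype α] [DecidableEq α]

theorem card_fixed_add_card_support (σ : Perm α) :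
    #{x | σ x = x} + #σ.support = Fintype.card α := by
  rw [support, ← card_univ]
  exact card_filter_add_card_filter_not _

theorem IsCycle.card_support_pow {c : Perm α} (hc : c.IsCycle) (n : ℕ) :
    #(c ^ n).support = if #c.support ∣ n then 0 else #c.support := by
  split_ifs with h
  · rw [← hc.orderOf, orderOf_dvd_iff_pow_eq_one] at h
    rw [h, support_one, card_empty]
  · rw [hc.support_pow_eq_iff.mpr (by rwa [hc.orderOf])]

theorem Disjoint.card_support_mul_pow {σ τ : Perm α} (h : σ.Disjoint τ) (n : ℕ) :
    #((σ * τ) ^ n).support = #(σ ^ n).support + #(τ ^ n).support := by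
  rw [h.commute.mul_pow, (h.pow_disjoint_pow n n).card_support_mul]

theorem IsCycle.eq_one_or_eq_of_forall_apply {c τ : Perm α} (hc : c.IsCycle)
    (h : ∀ x, τ x = x ∨ τ x = c x) : τ = 1 ∨ τ = c := by
  by_contra! hne
  obtain ⟨x, hx⟩ : ∃ x, τ x ≠ x := not_forall.mp fun h' => hne.1 (ext h')
  have hτx : τ x = c x := (h x).resolve_left hx
  have hcx : c x ≠ x := hτx ▸ hx
  -- If `τ y = c y ≠ y`, then `τ (c y) = c y` would contradict injectivity of `τ`.
  have horbit : ∀ m : ℕ, τ ((c ^ m) x) = c ((c ^ m) x) := by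
    intro m
    induction m with
    | zero => simpa using hτx
    | succ m ih =>
      rw [pow_succ', mul_apply]
      refine (h _).resolve_left fun hfix => ?_
      have hmem : (c ^ m) x ∈ c.support := pow_apply_mem_support.mpr (mem_support.mpr hcx)
      exact mem_support.mp hmem (τ.injective (hfix.trans ih.symm))
  refine hne.2 (ext fun y => ?_)
  by_cases hy : c y = y
  · rw [hy]
    exact (h y).elim id (·.trans hy)
  · obtain ⟨m, -, -, rfl⟩ := (hc.sameCycle hcx hy).exists_pow_eq c
    exact horbit m

end Equiv.Perm

namespace Matrix

open Equiv Equiv.Perm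

variable {α R : Type*} [DecidableEq α] [CommRing R]

theorem permMatrix_add_permMatrix_of_disjoint {σ τ : Perm α} (h : σ.Disjoint τ) :
    σ.permMatrix R + τ.permMatrix R = (σ * τ).permMatrix R + 1 := by
  ext i j
  simp only [add_apply, PEquiv.toMatrix_toPEquiv_eq, submatrix_apply, id, one_apply,
    Perm.mul_apply]
  rcases h i with hσ | hτ
  · by_cases hτi : τ i = i
    · simp [hσ, hτi]
    · have : σ (τ i) = τ i := (h (τ i)).resolve_right fun h' => hτi (τ.injective h')
      simp only [hσ, this, add_comm]
  · simp only [hτ]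

variable [Fintype α]

theorem one_sub_smul_permMatrix_mul_of_disjoint {σ τ : Perm α} (h : σ.Disjoint τ) (s : R) :
    (1 - s • σ.permMatrix R) * (1 - s • τ.permMatrix R)
      = (1 - s) • (1 - s • (σ * τ).permMatrix R) := by
  have hmul : σ.permMatrix R * τ.permMatrix R = (σ * τ).permMatrix R := by
    rw [← permMatrix_mul, h.commute.eq]
  calc (1 - s • σ.permMatrix R) * (1 - s • τ.permMatrix R)
      = 1 - s • (σ.permMatrix R + τ.permMatrix R) + s ^ 2 • (σ * τ).permMatrix R := by
        rw [← hmul]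
        simp only [sub_mul, mul_sub, one_mul, mul_one, smul_mul_smul_comm]
        module
    _ = (1 - s) • (1 - s • (σ * τ).permMatrix R) := by
        rw [permMatrix_add_permMatrix_of_disjoint h]
        module

theorem det_one_sub_smul_permMatrix_mul_of_disjoint {σ τ : Perm α} (h : σ.Disjoint τ) (s : R) :
    det (1 - s • σ.permMatrix R) * det (1 - s • τ.permMatrix R)
      = (1 - s) ^ Fintype.card α * det (1 - s • (σ * τ).permMatrix R) := by
  rw [← det_mul, one_sub_smul_permMatrix_mul_of_disjoint h, det_smul]

theorem det_one_sub_smul_permMatrix_of_isCycle {c : Perm α} (hc : c.IsCycle) (s : R) :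
    det (1 - s • c.permMatrix R) = (1 - s) ^ #{x | c x = x} * (1 - s ^ #c.support) := by
  set M := 1 - s • c.permMatrix R
  have hM : ∀ i j, M i j = (if i = j then 1 else 0) - if c i = j then s else 0 := by
    intro i j
    simp [M, one_apply]
  -- In the Leibniz expansion of `det Mᵀ` only `τ = 1` and `τ = c` avoid a zero entry `M i (τ i)`.
  have hvanish : ∀ τ : Perm α, τ ≠ 1 ∧ τ ≠ c → sign τ • ∏ i, Mᵀ (τ i) i = 0 := by
    rintro τ ⟨hτ1, hτc⟩
    suffices ∃ i, M i (τ i) = 0 by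
      obtain ⟨i, hi⟩ := this
      rw [prod_eq_zero (mem_univ i) (by rwa [transpose_apply]), smul_zero]
    by_contra! hne
    refine (hc.eq_one_or_eq_of_forall_apply fun i => ?_).elim hτ1 hτc
    by_contra! hi
    exact hne i (by rw [hM, if_neg (Ne.symm hi.1), if_neg (Ne.symm hi.2), sub_zero])
  have hdiag : ∏ i, M i i = (1 - s) ^ #{x | c x = x} :=
    calc ∏ i, M i i = ∏ i, if c i = i then 1 - s else 1 :=
          prod_congr rfl fun i _ => by rw [hM, if_pos rfl]; split_ifs <;> simp
      _ = (1 - s) ^ #{x | c x = x} := by rw [prod_ite, prod_const, prod_const_one, mul_one]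
  have hcyc : ∏ i, M i (c i) = (1 - s) ^ #{x | c x = x} * (-s) ^ #c.support :=
    calc ∏ i, M i (c i) = ∏ i, if c i = i then 1 - s else -s :=
          prod_congr rfl fun i _ => by
            rw [hM, if_pos rfl]
            by_cases h : c i = i
            · simp [h]
            · simp [h, Ne.symm h]
      _ = (1 - s) ^ #{x | c x = x} * (-s) ^ #c.support := by
        rw [prod_ite, prod_const, prod_const]; rfl
  rw [← det_transpose, det_apply, Fintype.sum_eq_add 1 c hc.ne_one.symm hvanish]
  simp only [transpose_apply, Perm.coe_one, id_eq, Perm.sign_one, one_smul, hdiag, hcyc, hc.sign]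
  rw [Units.smul_def, zsmul_eq_mul, neg_pow s]
  push_cast
  have hsign : ((-1 : R) ^ #c.support) * (-1) ^ #c.support = 1 := by rw [← mul_pow]; norm_num
  linear_combination (-(1 - s) ^ #{x | c x = x} * s ^ #c.support) * hsign

end Matrix

open Complex

theorem one_sub_ne_zero_of_norm_lt_one {s : ℂ} (hs : ‖s‖ < 1) : 1 - s ≠ 0 := by
  rw [sub_ne_zero]
  rintro rfl
  simp at hs

theorem hasSum_ite_dvd_div_mul_pow {s : ℂ} (hs : ‖s‖ < 1) {k : ℕ} (hk : 0 < k) :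
    HasSum (fun n : ℕ => (if k ∣ n then (k : ℂ) else 0) / n * s ^ n) (-log (1 - s ^ k)) := by
  have hsk : ‖s ^ k‖ < 1 := by rw [norm_pow]; exact pow_lt_one₀ (norm_nonneg s) hs hk.ne'
  rw [← (mul_right_injective₀ hk.ne').hasSum_iff]
  · convert hasSum_taylorSeries_neg_log hsk using 2 with j
    have hk' : (k : ℂ) ≠ 0 := Nat.cast_ne_zero.mpr hk.ne'
    simp only [Function.comp_apply, dvd_mul_right, if_true, Nat.cast_mul, pow_mul]
    rw [div_mul_cancel_left₀ hk', inv_mul_eq_div]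
  · rintro n hn
    rw [if_neg fun ⟨j, hj⟩ => hn ⟨j, hj.symm⟩, zero_div, zero_mul]

namespace Equiv.Perm

variable {α : Type*} [Fintype α] [DecidableEq α]

noncomputable def movedPointsSeries (σ : Perm α) (s : ℂ) (n : ℕ) : ℂ :=
  #(σ ^ n).support / n * s ^ n

theorem summable_movedPointsSeries (σ : Perm α) {s : ℂ} (hs : ‖s‖ < 1) :
    Summable (movedPointsSeries σ s) := by
  refine .of_norm_bounded ((summable_geometric_of_lt_one (norm_nonneg s) hs).mul_left
    (Fintype.card α : ℝ)) fun n => ?_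
  obtain rfl | hn := n.eq_zero_or_pos
  · simp [movedPointsSeries]
  rw [movedPointsSeries, norm_mul, norm_div, norm_pow, Complex.norm_natCast, Complex.norm_natCast]
  gcongr
  calc (#(σ ^ n).support : ℝ) / n ≤ #(σ ^ n).support := div_le_self (by positivity) (by simpa)
    _ ≤ Fintype.card α := by exact_mod_cast card_le_univ _

theorem movedPointsSeries_mul_of_disjoint {σ τ : Perm α} (h : σ.Disjoint τ) (s : ℂ) :
    movedPointsSeries (σ * τ) s = movedPointsSeries σ s + movedPointsSeries τ s := by
  ext n
  simp only [movedPointsSeries, h.card_support_mul_pow, Pi.add_apply]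
  push_cast
  ring

theorem IsCycle.hasSum_movedPointsSeries {c : Perm α} (hc : c.IsCycle) {s : ℂ} (hs : ‖s‖ < 1) :
    HasSum (movedPointsSeries c s) (#c.support * -log (1 - s) + log (1 - s ^ #c.support)) := by
  have hk : 0 < #c.support := by have := hc.two_le_card_support; omega
  have hterm : movedPointsSeries c s = fun n : ℕ => #c.support * (s ^ n / n)
      - (if #c.support ∣ n then (#c.support : ℂ) else 0) / n * s ^ n := by
    ext n
    rw [movedPointsSeries, hc.card_support_pow]
    split_ifs <;> push_cast <;> ring
  rw [hterm, ← sub_neg_eq_add]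
  exact ((hasSum_taylorSeries_neg_log hs).mul_left _).sub (hasSum_ite_dvd_div_mul_pow hs hk)

theorem det_one_sub_smul_permMatrix_eq_exp (σ : Perm α) {s : ℂ} (hs : ‖s‖ < 1) :
    det (1 - s • σ.permMatrix ℂ)
      = (1 - s) ^ Fintype.card α * exp (∑' n, movedPointsSeries σ s n) := by
  have h1s : 1 - s ≠ 0 := one_sub_ne_zero_of_norm_lt_one hs
  induction σ using cycle_induction_on with
  | base_one =>
    have hzero : movedPointsSeries (1 : Perm α) s = 0 := by ext n; simp [movedPointsSeries]
    have hsmul : (1 : Matrix α α ℂ) - s • 1 = (1 - s) • 1 := by rw [sub_smul, one_smul]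
    rw [hzero, permMatrix_one, hsmul, det_smul, det_one]
    simp
  | base_cycles c hc =>
    have hk : 0 < #c.support := by have := hc.two_le_card_support; omega
    have hsk : 1 - s ^ #c.support ≠ 0 := one_sub_ne_zero_of_norm_lt_one (by
      rw [norm_pow]; exact pow_lt_one₀ (norm_nonneg s) hs hk.ne')
    rw [det_one_sub_smul_permMatrix_of_isCycle hc, (hc.hasSum_movedPointsSeries hs).tsum_eq,
      exp_add, exp_log hsk, exp_nat_mul, Complex.exp_neg, exp_log h1s,
      ← card_fixed_add_card_support c, pow_add, inv_pow, mul_assoc,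
      mul_inv_cancel_left₀ (pow_ne_zero _ h1s)]
  | induction_disjoint σ τ hστ _ ihσ ihτ =>
    have hdet := det_one_sub_smul_permMatrix_mul_of_disjoint hστ s
    rw [ihσ, ihτ] at hdet
    rw [movedPointsSeries_mul_of_disjoint hστ]
    simp only [Pi.add_apply]
    rw [(summable_movedPointsSeries σ hs).tsum_add (summable_movedPointsSeries τ hs), exp_add]
    apply mul_left_cancel₀ (pow_ne_zero (Fintype.card α) h1s)
    rw [← hdet]
    ring

end Equiv.Perm

/-- **Determinant expression for the permutation zeta function.**
For a permutation `σ` of `Fin n` and `s ∈ ℂ` with `|s| < 1`,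
`exp(∑_{m≥1} #Fix(σ^m)/m · s^m) · det(I_n − s·P_σ) = 1`. -/
theorem perm_zeta_det_expression (n : ℕ) (σ : Equiv.Perm (Fin n)) (s : ℂ)
    (hs : ‖s‖ < 1) :
    Complex.exp (∑' m : ℕ,
        ((Finset.univ.filter (fun x : Fin n => (σ ^ (m + 1)) x = x)).card : ℂ)
          / (m + 1) * s ^ (m + 1)) *
      ((1 : Matrix (Fin n) (Fin n) ℂ) - s • σ.permMatrix ℂ).det = 1 := by
  have hterm : ∀ m : ℕ, (#{x | (σ ^ m) x = x} : ℂ) / m * s ^ m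
      = n * (s ^ m / m) - σ.movedPointsSeries s m := by
    intro m
    have h : (#{x | (σ ^ m) x = x} : ℂ) + #(σ ^ m).support = n := by
      exact_mod_cast Fintype.card_fin n ▸ (σ ^ m).card_fixed_add_card_support
    rw [Equiv.Perm.movedPointsSeries, ← h]
    ring
  have hsum := ((hasSum_taylorSeries_neg_log hs).mul_left (n : ℂ)).sub
    (σ.summable_movedPointsSeries hs).hasSum
  simp_rw [← hterm] at hsum
  -- The `m = 0` term vanishes because `x / 0 = 0`.
  have hshift := (hasSum_nat_add_iff' 1).mpr hsum
  simp only [Finset.range_one, Finset.sum_singleton, Nat.cast_zero, div_zero, zero_mul, sub_zero,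
    Nat.cast_add, Nat.cast_one] at hshift
  have h1s := one_sub_ne_zero_of_norm_lt_one hs
  rw [hshift.tsum_eq, σ.det_one_sub_smul_permMatrix_eq_exp hs, Fintype.card_fin, exp_sub,
    exp_nat_mul, Complex.exp_neg, exp_log h1s, inv_pow]
  field_simp
end

section
/- Let σ be a permutation of Fin n and s ∈ ℂ. If det(I_n − e^{−s}·P_σ) = 0, then Re(s) = 0. (Analogue of the Riemann hypothesis for the permutation zeta function ζ_σ(s) = det(I_n − s·P_σ)^{−1}: all poles of ζ_σ(e^{−s}) lie on the line Re(s) = 0.) -/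
open Matrix

/-! If `det (1 - c • P_σ) = 0`, a nonzero kernel vector `v` satisfies `v = c • (v ∘ σ)`;
iterating `orderOf σ` times gives `c ^ orderOf σ = 1`. So `e^{-s}` is a root of unity,
whence `e^{-Re s} = |e^{-s}| = 1`. -/

section

variable {ι α M : Type*} [Monoid M] [MulAction M α]

theorem Equiv.Perm.eq_pow_smul_comp_pow {σ : Equiv.Perm ι} {c : M} {v : ι → α}
    (h : v = c • (v ∘ σ)) (k : ℕ) : v = c ^ k • (v ∘ ⇑(σ ^ k)) := by
  induction k with
  | zero => simp
  | succ k ih =>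
    conv_lhs => rw [h, ih]
    ext i
    rw [pow_succ' c, pow_succ σ]
    simp [smul_smul]

end

theorem Equiv.Perm.pow_orderOf_eq_one_of_eq_smul_comp {ι R : Type*} [MonoidWithZero R]
    [IsRightCancelMulZero R] {σ : Equiv.Perm ι} {c : R} {v : ι → R} (hv : v ≠ 0)
    (h : v = c • (v ∘ σ)) :
    c ^ orderOf σ = 1 := by
  obtain ⟨i, hi⟩ := Function.ne_iff.mp hv
  have hvi := congrFun (σ.eq_pow_smul_comp_pow h (orderOf σ)) i
  rw [pow_orderOf_eq_one] at hvi
  exact (mul_eq_right₀ hi).mp hvi.symm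

theorem Matrix.pow_orderOf_eq_one_of_det_one_sub_smul_permMatrix_eq_zero
    {ι R : Type*} [Fintype ι] [DecidableEq ι] [CommRing R] [IsDomain R]
    (σ : Equiv.Perm ι) (c : R) (h : (1 - c • σ.permMatrix R).det = 0) :
    c ^ orderOf σ = 1 := by
  obtain ⟨v, hv, hker⟩ := exists_mulVec_eq_zero_iff.mpr h
  rw [sub_mulVec, one_mulVec, smul_mulVec, permMatrix_mulVec, sub_eq_zero] at hker
  exact σ.pow_orderOf_eq_one_of_eq_smul_comp hv hker

/-- **Riemann hypothesis analogue for the permutation zeta function.**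
If `det(I_n − e^{−s}·P_σ) = 0` then `Re(s) = 0`. -/
theorem perm_zeta_riemann_hypothesis (n : ℕ) (σ : Equiv.Perm (Fin n)) (s : ℂ)
    (h : ((1 : Matrix (Fin n) (Fin n) ℂ) - Complex.exp (-s) • σ.permMatrix ℂ).det = 0) :
    s.re = 0 := by
  have hroot := pow_orderOf_eq_one_of_det_one_sub_smul_permMatrix_eq_zero σ _ h
  have hnorm := Complex.norm_eq_one_of_pow_eq_one hroot (orderOf_pos σ).ne'
  rwa [Complex.norm_exp, Real.exp_eq_one_iff, Complex.neg_re, neg_eq_zero] at hnorm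
end

section
/- For every word w ∈ FreeGroup (Fin (n−1)) and every s ∈ ℂ, det(I_n − s·β_{n,q}(w)) = (1 − s) · det(I_{n−1} − s·β^r_{n,q}(w)). (The Burau representation decomposes as the direct sum of the trivial representation and the reduced Burau representation: conjugating by the explicit matrix C_{n,q} with entries (C_{n,q})_{ij} = q^{i−1} for i ≤ j and 0 otherwise turns β_{n,q} into 1 ⊕ β^r_{n,q}.) -/
open Matrix

/-- The (unreduced) Burau matrix `B_{i+1} = I_i ⊕ [[1−q, 1], [q, 0]] ⊕ I_{n-i-2}`
(the 2×2 block sits in rows/columns `i`, `i+1`, zero-based). -/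
noncomputable def burauMatrix (n : ℕ) (q : ℂ) (i : Fin (n - 1)) :
    Matrix (Fin n) (Fin n) ℂ := fun j k =>
  if (j : ℕ) = i ∧ (k : ℕ) = i then 1 - q
  else if (j : ℕ) = i ∧ (k : ℕ) = (i : ℕ) + 1 then 1
  else if (j : ℕ) = (i : ℕ) + 1 ∧ (k : ℕ) = i then q
  else if (j : ℕ) = (i : ℕ) + 1 ∧ (k : ℕ) = (i : ℕ) + 1 then 0
  else if j = k then 1 else 0

/-- The reduced Burau matrix `B^r_{i+1}` (zero-based generator index `i`): it agrees
with the identity except in row `i`, where the entries at columns `i−1, i, i+1`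
are `q, −q, 1` respectively. -/
noncomputable def rBurauMatrix (n : ℕ) (q : ℂ) (i : Fin (n - 1)) :
    Matrix (Fin (n - 1)) (Fin (n - 1)) ℂ := fun j k =>
  if (j : ℕ) = i then
    if (k : ℕ) + 1 = i then q
    else if (k : ℕ) = i then -q
    else if (k : ℕ) = (i : ℕ) + 1 then 1
    else 0
  else if j = k then 1 else 0

/-!
Let `P` be the lower bidiagonal matrix with `1` on the diagonal and `-1` below it. A direct
computation gives `B_i P = P R_i`, where `R_i` is the reduced Burau matrix of the same generator
on `n + 1` strands. The last row of `R_i` is the last standard basis row and its top-left block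
is `B^r_i`. Invertible matrices with that last row form a group on which the top-left block is
multiplicative, so `P⁻¹ β(w) P` is block upper triangular with diagonal blocks `β^r(w)` and `1`,
and expanding `det (1 - s • P⁻¹ β(w) P)` along its last row gives the factor `1 - s`.
-/

theorem Fin.sum_ite_val_eq {M : Type*} [AddCommMonoid M] {N : ℕ} (t : ℕ) (f : Fin N → M) :
    (∑ l : Fin N, if (l : ℕ) = t then f l else 0) = if h : t < N then f ⟨t, h⟩ else 0 := by
  split_ifs with h
  · rw [Finset.sum_eq_single_of_mem ⟨t, h⟩ (Finset.mem_univ _)]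
    · simp
    · intro l _ hl
      rw [if_neg fun hlt => hl (Fin.ext hlt)]
  · exact Finset.sum_eq_zero fun l _ => if_neg (by omega)

namespace Matrix

section Ring

variable {R : Type*} [Ring R] {m : ℕ}

variable (R m) in
def differenceMatrix : Matrix (Fin m) (Fin m) R := fun j k =>
  if (j : ℕ) = k then 1 else if (j : ℕ) = k + 1 then -1 else 0

theorem mul_differenceMatrix_apply (A : Matrix (Fin m) (Fin m) R) (j k : Fin m) :
    (A * differenceMatrix R m) j k
      = A j k - if h : (k : ℕ) + 1 < m then A j ⟨k + 1, h⟩ else 0 := by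
  have hP : ∀ l : Fin m, differenceMatrix R m l k
      = (if (l : ℕ) = k then 1 else 0) - if (l : ℕ) = k + 1 then 1 else 0 := by
    intro l
    simp only [differenceMatrix]
    split_ifs <;> first | omega | simp
  simp only [mul_apply, hP, mul_sub, mul_ite, mul_one, mul_zero, Finset.sum_sub_distrib,
    Fin.sum_ite_val_eq, dif_pos k.isLt]

theorem differenceMatrix_mul_apply (A : Matrix (Fin m) (Fin m) R) (j k : Fin m) :
    (differenceMatrix R m * A) j k
      = A j k - if h : 0 < (j : ℕ) then A ⟨j - 1, by omega⟩ k else 0 := by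
  have hP : ∀ l : Fin m, differenceMatrix R m j l
      = (if (l : ℕ) = j then 1 else 0)
        - if 0 < (j : ℕ) then (if (l : ℕ) = j - 1 then 1 else 0) else 0 := by
    intro l
    simp only [differenceMatrix]
    split_ifs <;> first | omega | simp
  simp only [mul_apply, hP, sub_mul, ite_mul, one_mul, zero_mul, Finset.sum_sub_distrib,
    Finset.sum_ite_irrel, Finset.sum_const_zero, Fin.sum_ite_val_eq, dif_pos j.isLt]
  split_ifs <;> first | rfl | omega

end Ring

section CommRing

variable {R : Type*} [CommRing R]

theorem det_differenceMatrix {m : ℕ} : (differenceMatrix R m).det = 1 := by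
  rw [det_of_isLowerTriangular]
  · simp [differenceMatrix]
  · intro j k hjk
    have hjk : (j : ℕ) < k := hjk
    simp only [differenceMatrix]
    rw [if_neg (by omega), if_neg (by omega)]

variable (R) in
noncomputable def differenceMatrixUnit (m : ℕ) : GL (Fin m) R :=
  ((isUnit_iff_isUnit_det _).2 (det_differenceMatrix (R := R) (m := m) ▸ isUnit_one)).unit

theorem coe_differenceMatrixUnit {m : ℕ} :
    (differenceMatrixUnit R m : Matrix (Fin m) (Fin m) R) = differenceMatrix R m :=
  IsUnit.unit_spec _

variable {n : Type*} [Fintype n] [DecidableEq n]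

def vecMulStabilizer (v : n → R) : Subgroup (GL n R) where
  carrier := {A | v ᵥ* (A : Matrix n n R) = v}
  one_mem' := vecMul_one v
  mul_mem' {A B} hA hB := by
    simp only [Set.mem_ofPred_eq, Units.val_mul, ← vecMul_vecMul] at hA hB ⊢
    rw [hA, hB]
  inv_mem' {A} hA := by
    change v ᵥ* (A : Matrix n n R) = v at hA
    change v ᵥ* ((A⁻¹ : GL n R) : Matrix n n R) = v
    conv_lhs => rw [← hA]
    rw [vecMul_vecMul, Units.mul_inv, vecMul_one]

theorem mem_vecMulStabilizer_single_one_iff {i : n} {A : GL n R} :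
    A ∈ vecMulStabilizer (Pi.single i 1) ↔ (A : Matrix n n R) i = Pi.single i 1 := by
  change Pi.single i 1 ᵥ* (A : Matrix n n R) = _ ↔ _
  rw [single_one_vecMul]
  rfl

variable {m : ℕ}

theorem det_eq_mul_det_submatrix_castSucc (A : Matrix (Fin (m + 1)) (Fin (m + 1)) R) (c : R)
    (h : A (Fin.last m) = Pi.single (Fin.last m) c) :
    A.det = c * (A.submatrix Fin.castSucc Fin.castSucc).det := by
  rw [det_succ_row A (Fin.last m), Finset.sum_eq_single (Fin.last m)]
  · simp [h, ← two_mul, pow_mul]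
  · intro j _ hj
    simp [h, hj]
  · simp

variable (R m) in
def topLeftHom :
    vecMulStabilizer (Pi.single (Fin.last m) (1 : R)) →* Matrix (Fin m) (Fin m) R where
  toFun A := ((A : GL (Fin (m + 1)) R) : Matrix (Fin (m + 1)) (Fin (m + 1)) R).submatrix
    Fin.castSucc Fin.castSucc
  map_one' := submatrix_one _ (Fin.castSucc_injective m)
  map_mul' A B := by
    have hB := mem_vecMulStabilizer_single_one_iff.1 B.2
    ext j k
    simp [mul_apply, Fin.sum_univ_castSucc, hB]

theorem det_one_sub_smul_eq_mul_det_topLeftHom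
    (A : vecMulStabilizer (Pi.single (Fin.last m) (1 : R))) (s : R) :
    (1 - s • ((A : GL (Fin (m + 1)) R) : Matrix (Fin (m + 1)) (Fin (m + 1)) R)).det
      = (1 - s) * (1 - s • topLeftHom R m A).det := by
  have hA := mem_vecMulStabilizer_single_one_iff.1 A.2
  rw [det_eq_mul_det_submatrix_castSucc _ (1 - s)]
  · congr 2
    ext j k
    simp [topLeftHom, one_apply]
  · ext k
    rcases eq_or_ne k (Fin.last m) with rfl | hk
    · simp [hA]
    · simp [hA, hk, hk.symm]

end CommRing

end Matrix

-- `rBurauMatrix (m + 2) q i.castSucc`, with its index type `Fin (m + 2 - 1)` restated as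
-- `Fin (m + 1)`.
noncomputable def rBurauMatrixSucc (m : ℕ) (q : ℂ) (i : Fin m) :
    Matrix (Fin (m + 1)) (Fin (m + 1)) ℂ :=
  rBurauMatrix (m + 2) q i.castSucc

theorem rBurauMatrixSucc_last {m : ℕ} (q : ℂ) (i : Fin m) :
    rBurauMatrixSucc m q i (Fin.last m) = Pi.single (Fin.last m) 1 := by
  ext k
  have hi := i.isLt
  simp only [rBurauMatrixSucc, rBurauMatrix, Fin.val_last, Fin.val_castSucc, Pi.single_apply,
    eq_comm (a := Fin.last m)]
  rw [if_neg (by omega)]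

theorem rBurauMatrixSucc_submatrix_castSucc {m : ℕ} (q : ℂ) (i : Fin m) :
    (rBurauMatrixSucc m q i).submatrix Fin.castSucc Fin.castSucc = rBurauMatrix (m + 1) q i := by
  ext j k
  simp [rBurauMatrixSucc, rBurauMatrix]

theorem burauMatrix_mul_differenceMatrix {m : ℕ} (q : ℂ) (i : Fin m) :
    burauMatrix (m + 1) q i * differenceMatrix ℂ (m + 1)
      = differenceMatrix ℂ (m + 1) * rBurauMatrixSucc m q i := by
  ext j k
  rw [mul_differenceMatrix_apply, differenceMatrix_mul_apply]
  have hi := i.isLt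
  have hj := j.isLt
  have hk := k.isLt
  simp only [burauMatrix, rBurauMatrixSucc, rBurauMatrix, Fin.ext_iff, Fin.val_castSucc]
  -- Locating `j` and `k` relative to `i` decides all but the `j = k` conditions.
  obtain hj | hj | hj | hj | hj : (j : ℕ) < i ∨ (j : ℕ) = i ∨ (j : ℕ) = i + 1 ∨
      (j : ℕ) = i + 2 ∨ i + 2 < (j : ℕ) := by omega
  all_goals obtain hk | hk | hk | hk | hk : (k : ℕ) + 1 < i ∨ (k : ℕ) + 1 = i ∨
      (k : ℕ) = i ∨ (k : ℕ) = i + 1 ∨ i + 1 < (k : ℕ) := by omega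
  all_goals simp (disch := omega) only [if_pos, if_neg, dif_pos]
  all_goals first | ring1 | split_ifs <;> first | omega | ring1

section Conjugation

variable {m : ℕ} (q : ℂ) (β : FreeGroup (Fin m) →* GL (Fin (m + 1)) ℂ)

theorem conj_burau_of_eq_rBurauMatrixSucc
    (hβ : ∀ i, (β (.of i) : Matrix (Fin (m + 1)) (Fin (m + 1)) ℂ) = burauMatrix (m + 1) q i)
    (i : Fin m) :
    (MulAut.conj (differenceMatrixUnit ℂ (m + 1))⁻¹ (β (.of i)) :
      Matrix (Fin (m + 1)) (Fin (m + 1)) ℂ) = rBurauMatrixSucc m q i := by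
  rw [MulAut.conj_apply, inv_inv, Units.val_mul, Units.val_mul, hβ, mul_assoc,
    coe_differenceMatrixUnit, burauMatrix_mul_differenceMatrix, ← coe_differenceMatrixUnit,
    Units.inv_mul_cancel_left]

theorem conj_burau_mem_vecMulStabilizer
    (hβ : ∀ i, (β (.of i) : Matrix (Fin (m + 1)) (Fin (m + 1)) ℂ) = burauMatrix (m + 1) q i)
    (w : FreeGroup (Fin m)) :
    MulAut.conj (differenceMatrixUnit ℂ (m + 1))⁻¹ (β w)
      ∈ vecMulStabilizer (Pi.single (Fin.last m) 1) := by
  induction w using FreeGroup.induction_on with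
  | C1 => rw [map_one, map_one]; exact one_mem _
  | of i =>
    rw [mem_vecMulStabilizer_single_one_iff, conj_burau_of_eq_rBurauMatrixSucc q β hβ,
      rBurauMatrixSucc_last]
  | inv_of i h => rw [map_inv β, map_inv (MulAut.conj _)]; exact inv_mem h
  | mul x y hx hy => rw [map_mul, map_mul]; exact mul_mem hx hy

theorem det_one_sub_smul_burau
    (hβ : ∀ i, (β (.of i) : Matrix (Fin (m + 1)) (Fin (m + 1)) ℂ) = burauMatrix (m + 1) q i)
    (βr : FreeGroup (Fin m) →* GL (Fin m) ℂ)
    (hβr : ∀ i, (βr (.of i) : Matrix (Fin m) (Fin m) ℂ) = rBurauMatrix (m + 1) q i)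
    (w : FreeGroup (Fin m)) (s : ℂ) :
    (1 - s • (β w : Matrix (Fin (m + 1)) (Fin (m + 1)) ℂ)).det
      = (1 - s) * (1 - s • (βr w : Matrix (Fin m) (Fin m) ℂ)).det := by
  set P := differenceMatrixUnit ℂ (m + 1)
  set γ := ((MulAut.conj P⁻¹).toMonoidHom.comp β).codRestrict _
    (conj_burau_mem_vecMulStabilizer q β hβ)
  have hγ : (topLeftHom ℂ m).comp γ = (Units.coeHom _).comp βr := by
    refine FreeGroup.ext_hom _ _ fun i => ?_
    change ((MulAut.conj P⁻¹ (β (.of i)) : GL (Fin (m + 1)) ℂ) :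
      Matrix (Fin (m + 1)) (Fin (m + 1)) ℂ).submatrix Fin.castSucc Fin.castSucc = βr (.of i)
    rw [conj_burau_of_eq_rBurauMatrixSucc q β hβ, rBurauMatrixSucc_submatrix_castSucc, hβr]
  have hconj : (1 - s • (β w : Matrix (Fin (m + 1)) (Fin (m + 1)) ℂ)).det
      = (1 - s • ((γ w : GL (Fin (m + 1)) ℂ) : Matrix (Fin (m + 1)) (Fin (m + 1)) ℂ)).det := by
    rw [← det_units_conj' P]
    simp [γ, mul_sub, sub_mul, mul_assoc]
  rw [hconj, det_one_sub_smul_eq_mul_det_topLeftHom, ← MonoidHom.comp_apply, hγ]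
  rfl

end Conjugation

theorem burau_decomposition_general (n : ℕ) (hn : 2 ≤ n) (q : ℂ)
    (β : FreeGroup (Fin (n - 1)) →* GL (Fin n) ℂ)
    (hβ : ∀ i, (β (FreeGroup.of i) : Matrix (Fin n) (Fin n) ℂ) = burauMatrix n q i)
    (βr : FreeGroup (Fin (n - 1)) →* GL (Fin (n - 1)) ℂ)
    (hβr : ∀ i, (βr (FreeGroup.of i) : Matrix (Fin (n - 1)) (Fin (n - 1)) ℂ) = rBurauMatrix n q i)
    (w : FreeGroup (Fin (n - 1))) (s : ℂ) :
    ((1 : Matrix (Fin n) (Fin n) ℂ) - s • (β w : Matrix (Fin n) (Fin n) ℂ)).det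
      = (1 - s) *
        ((1 : Matrix (Fin (n - 1)) (Fin (n - 1)) ℂ)
          - s • (βr w : Matrix (Fin (n - 1)) (Fin (n - 1)) ℂ)).det := by
  obtain ⟨m, rfl⟩ : ∃ m, n = m + 1 := ⟨n - 1, by omega⟩
  exact det_one_sub_smul_burau q β hβ βr hβr w s

/-- **Decomposition of the Burau representation.** For every braid word `w` and `s ∈ ℂ`,
`det(I_n − s·β_{n,q}(w)) = (1 − s) · det(I_{n−1} − s·β^r_{n,q}(w))`. -/
theorem burau_decomposition (n : ℕ) (hn : 2 ≤ n) (q : ℂ) (hq : q ≠ 0)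
    (β : FreeGroup (Fin (n - 1)) →* GL (Fin n) ℂ)
    (hβ : ∀ i, (β (FreeGroup.of i) : Matrix (Fin n) (Fin n) ℂ) = burauMatrix n q i)
    (βr : FreeGroup (Fin (n - 1)) →* GL (Fin (n - 1)) ℂ)
    (hβr : ∀ i, (βr (FreeGroup.of i) : Matrix (Fin (n - 1)) (Fin (n - 1)) ℂ) = rBurauMatrix n q i)
    (w : FreeGroup (Fin (n - 1))) (s : ℂ) :
    ((1 : Matrix (Fin n) (Fin n) ℂ) - s • (β w : Matrix (Fin n) (Fin n) ℂ)).det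
      = (1 - s) *
        ((1 : Matrix (Fin (n - 1)) (Fin (n - 1)) ℂ)
          - s • (βr w : Matrix (Fin (n - 1)) (Fin (n - 1)) ℂ)).det :=
  burau_decomposition_general n hn q β hβ βr hβr w s
end

section
/- Let π_n : FreeGroup (Fin (n−1)) → S_n be the homomorphism sending the i-th free generator to the transposition (i, i+1). Let w ∈ FreeGroup (Fin (n−1)) be a word such that π_n(w) is an n-cycle (i.e. a cycle whose support is all of Fin n). Then, specializing the reduced Burau representation at q = 1, det(I_{n−1} − β^r_{n,1}(w)) = n. (Since det(I_{n−1} − β^r_{n,q}(σ)) = [n]_q · Δ_{σ̂}(q) when the closure σ̂ is a knot, and [n]_1 = n, this expresses the fact that the Alexander polynomial of any knot satisfies Δ_{σ̂}(1) = 1.) -/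
open Matrix

/-!
At `q = 1` the reduced Burau matrix `B^r_i` is the matrix of the transposition `(i, i+1)` acting
on the sum-zero hyperplane of `ℂ^n` in the basis `e_k - e_{k+1}`, so `β^r_{n,1}` factors through
`π_n` and this representation `ρ` of `S_n`. Completing the basis by `e_{n-1}` makes every
permutation matrix `P_σ` block upper triangular with diagonal blocks `ρ(σ)` and `1`, hence
`charpoly P_σ = charpoly ρ(σ) * (X - 1)`. For an `n`-cycle `σ` only the identity and `σ⁻¹`
survive in the Leibniz expansion of `det (X - P_σ)`, which is therefore `X^n - 1`. Thus
`charpoly ρ(σ) = 1 + X + ⋯ + X^(n-1)`, and `det (1 - ρ(σ))` is its value `n` at `1`.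
-/

open Polynomial Finset Equiv

namespace Equiv.Perm

variable {α : Type*} [Fintype α] [DecidableEq α] {σ τ : Perm α}

theorem IsCycle.eq_one_or_eq_of_forall_apply_eq_or_eq (hσ : σ.IsCycle) (hs : σ.support = univ)
    (h : ∀ x, τ x = x ∨ τ x = σ x) : τ = 1 ∨ τ = σ := by
  have hmoved : ∀ x, σ x ≠ x := fun x => mem_support.mp (hs ▸ mem_univ x)
  -- The set where `τ` agrees with `σ` is `σ`-stable, so it is empty or everything.
  by_contra! hne
  obtain ⟨x₀, hx₀⟩ : ∃ x, τ x ≠ x := not_forall.mp fun h' => hne.1 (Equiv.ext h')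
  have hstep : ∀ x, τ x = σ x → τ (σ x) = σ (σ x) := fun x hx =>
    (h (σ x)).resolve_left fun hfix => hmoved x (τ.injective (hfix.trans hx.symm))
  have hpow : ∀ k : ℕ, τ ((σ ^ k) x₀) = σ ((σ ^ k) x₀) := by
    intro k
    induction k with
    | zero => exact (h x₀).resolve_left hx₀
    | succ k ih => rw [pow_succ', Perm.mul_apply]; exact hstep _ ih
  refine hne.2 (Equiv.ext fun y => ?_)
  obtain ⟨k, rfl⟩ := hσ.exists_pow_eq (hmoved x₀) (hmoved y)
  exact hpow k

theorem IsCycle.charpoly_permMatrix (R : Type*) [CommRing R] (hσ : σ.IsCycle)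
    (hs : σ.support = univ) : (σ.permMatrix R).charpoly = X ^ Fintype.card α - 1 := by
  have hmoved : ∀ x, σ x ≠ x := fun x => mem_support.mp (hs ▸ mem_univ x)
  have hentry : ∀ a b, (σ.permMatrix R).charmatrix a b =
      (if a = b then X else 0) - if σ a = b then 1 else 0 := by
    intro a b
    simp [charmatrix_apply, diagonal_apply, PEquiv.toMatrix_apply, apply_ite C]
  -- Only `τ = 1` and `τ = σ⁻¹` contribute to the Leibniz expansion.
  rw [charpoly, det_apply, Fintype.sum_eq_add 1 σ⁻¹ (inv_ne_one.mpr hσ.ne_one).symm]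
  · have hsign : (Perm.sign σ⁻¹ : ℤ) = -(-1) ^ Fintype.card α := by
      rw [sign_inv, hσ.sign, hs, card_univ]; push_cast; ring
    have hinv : ∀ x, σ⁻¹ x ≠ x := fun x h => hmoved x (inv_eq_iff_eq.mp h).symm
    simp only [hentry, Perm.one_apply, if_true, if_neg (hmoved _), if_neg (hinv _), sign_one,
      one_smul, sub_zero, zero_sub, prod_const, card_univ, Units.smul_def, hsign, zsmul_eq_mul]
    simp [← mul_pow, sub_eq_add_neg]
  · rintro τ ⟨h1, hinv⟩
    obtain ⟨x, hx1, hx2⟩ : ∃ x, τ x ≠ x ∧ τ x ≠ σ⁻¹ x := by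
      by_contra! h
      exact (hσ.inv.eq_one_or_eq_of_forall_apply_eq_or_eq (by rwa [Perm.support_inv])
        fun x => or_iff_not_imp_left.mpr (h x)).elim h1 hinv
    refine smul_eq_zero_of_right _ (prod_eq_zero (mem_univ x) ?_)
    rw [hentry, if_neg hx1, if_neg fun h => hx2 (eq_inv_iff_eq.mpr h)]
    simp

-- Mathlib's `σ.permMatrix` sends `e_{σ a}` to `e_a`; the permutation representation is
-- `σ ↦ σ⁻¹.permMatrix`.
theorem permMatrix_inv_mulVec_single {R : Type*} [CommRing R] (σ : Perm α) (a : α) :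
    σ⁻¹.permMatrix R *ᵥ Pi.single a 1 = Pi.single (σ a) 1 := by
  ext j
  simp [Pi.single_apply, Equiv.symm_apply_eq]

end Equiv.Perm

section SumZero

variable {R : Type*} [CommRing R] {n : ℕ}

-- Its columns `e_k - e_{k+1}` (`k < n`) and `e_n` form a basis of `R^{n+1}` whose first `n`
-- vectors span the sum-zero hyperplane.
variable (R n) in
def diffMatrix : Matrix (Fin (n + 1)) (Fin (n + 1)) R :=
  of fun j k => if j = k then 1 else if (j : ℕ) = k + 1 then -1 else 0

def stepVec (a : Fin (n + 1)) : Fin (n + 1) → R := fun j => if a ≤ j then 1 else 0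

theorem diffMatrix_mulVec_stepVec (a : Fin (n + 1)) :
    diffMatrix R n *ᵥ stepVec a = Pi.single a 1 := by
  ext j
  have hsplit : ∀ m, diffMatrix R n j m * stepVec a m =
      (if m = j then stepVec a m else 0) - if (j : ℕ) = m + 1 then stepVec a m else 0 := by
    intro m
    by_cases hjm : j = m
    · subst hjm; simp [diffMatrix]
    · simp only [diffMatrix, of_apply, hjm, Ne.symm hjm, if_false, ite_mul, neg_mul, one_mul,
        zero_mul, zero_sub]
      split_ifs <;> ring
  simp only [mulVec, dotProduct, hsplit, sum_sub_distrib, sum_ite_eq', mem_univ, if_true]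
  cases j using Fin.cases with
  | zero => simp [stepVec, Pi.single_apply, eq_comm]
  | succ j =>
    have hprev : ∀ m : Fin (n + 1), (j.succ : ℕ) = m + 1 ↔ m = j.castSucc := by
      simp [Fin.ext_iff, eq_comm]
    simp only [hprev, sum_ite_eq', mem_univ, if_true]
    simp only [stepVec, Pi.single_apply, Fin.le_iff_val_le_val, Fin.ext_iff, Fin.val_succ,
      Fin.val_castSucc]
    split_ifs <;> first | (exfalso; omega) | ring

theorem isUnit_diffMatrix : IsUnit (diffMatrix R n) := by
  rw [isUnit_iff_isUnit_det, det_of_isLowerTriangular]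
  · simp [diffMatrix]
  · intro j k hjk
    have : (j : ℕ) < k := hjk
    simp only [diffMatrix, of_apply, Fin.ext_iff]
    split_ifs <;> first | rfl | omega

-- Entry `(j, k)` is the coefficient of `e_j - e_{j+1}` in `e_{σ k} - e_{σ (k+1)}`, i.e. the
-- `j`-th partial sum of the coordinates of the latter.
def sumZeroPermMatrix (σ : Perm (Fin (n + 1))) : Matrix (Fin n) (Fin n) R :=
  of fun j k => stepVec (σ k.castSucc) j.castSucc - stepVec (σ k.succ) j.castSucc

-- The matrix of `σ` in the basis formed by the columns of `diffMatrix`.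
def blockPermMatrix (σ : Perm (Fin (n + 1))) : Matrix (Fin (n + 1)) (Fin (n + 1)) R :=
  reindexAlgEquiv R R finSumFinEquiv <|
    fromBlocks (sumZeroPermMatrix σ) (of fun j _ => stepVec (σ (Fin.last n)) j.castSucc) 0 1

theorem stepVec_last (a : Fin (n + 1)) : stepVec a (Fin.last n) = (1 : R) :=
  if_pos (Fin.le_last a)

theorem blockPermMatrix_mulVec_single_castSucc (σ : Perm (Fin (n + 1))) (k : Fin n) :
    blockPermMatrix σ *ᵥ Pi.single k.castSucc 1 =
      stepVec (σ k.castSucc) - (stepVec (σ k.succ) : _ → R) := by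
  ext j
  rw [mulVec_single_one]
  cases j using Fin.lastCases with
  | last => simp [blockPermMatrix, stepVec_last]
  | cast j => simp [blockPermMatrix, sumZeroPermMatrix]

theorem blockPermMatrix_mulVec_single_last (σ : Perm (Fin (n + 1))) :
    blockPermMatrix σ *ᵥ Pi.single (Fin.last n) 1 = (stepVec (σ (Fin.last n)) : _ → R) := by
  ext j
  rw [mulVec_single_one]
  cases j using Fin.lastCases with
  | last => simp [blockPermMatrix, stepVec_last]
  | cast j => simp [blockPermMatrix]

theorem diffMatrix_mulVec_single_castSucc (k : Fin n) :
    diffMatrix R n *ᵥ Pi.single k.castSucc 1 = Pi.single k.castSucc 1 - Pi.single k.succ 1 := by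
  ext j
  simp only [mulVec_single_one, col_apply, diffMatrix, of_apply, Pi.sub_apply, Pi.single_apply,
    Fin.ext_iff, Fin.val_castSucc, Fin.val_succ]
  split_ifs <;> first | (exfalso; omega) | simp

theorem diffMatrix_mulVec_single_last :
    diffMatrix R n *ᵥ Pi.single (Fin.last n) 1 = Pi.single (Fin.last n) 1 := by
  ext j
  simp [diffMatrix, Pi.single_apply, Fin.ext_iff, j.is_le.trans_lt (Nat.lt_succ_self n) |>.ne]

theorem diffMatrix_mul_blockPermMatrix (σ : Perm (Fin (n + 1))) :
    diffMatrix R n * blockPermMatrix σ = σ⁻¹.permMatrix R * diffMatrix R n := by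
  refine ext_of_mulVec_single fun k => ?_
  rw [← mulVec_mulVec, ← mulVec_mulVec]
  cases k using Fin.lastCases with
  | last =>
    rw [blockPermMatrix_mulVec_single_last, diffMatrix_mulVec_single_last,
      diffMatrix_mulVec_stepVec, Perm.permMatrix_inv_mulVec_single]
  | cast k =>
    rw [blockPermMatrix_mulVec_single_castSucc, diffMatrix_mulVec_single_castSucc, mulVec_sub,
      mulVec_sub, diffMatrix_mulVec_stepVec, diffMatrix_mulVec_stepVec,
      Perm.permMatrix_inv_mulVec_single, Perm.permMatrix_inv_mulVec_single]

theorem blockPermMatrix_mul (σ τ : Perm (Fin (n + 1))) :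
    blockPermMatrix (σ * τ) = blockPermMatrix σ * (blockPermMatrix τ : Matrix _ _ R) :=
  isUnit_diffMatrix.mul_left_cancel <| calc
    diffMatrix R n * blockPermMatrix (σ * τ)
        = σ⁻¹.permMatrix R * (τ⁻¹.permMatrix R * diffMatrix R n) := by
      rw [diffMatrix_mul_blockPermMatrix, _root_.mul_inv_rev, permMatrix_mul, mul_assoc]
    _ = diffMatrix R n * (blockPermMatrix σ * blockPermMatrix τ) := by
      rw [← diffMatrix_mul_blockPermMatrix, ← mul_assoc, ← diffMatrix_mul_blockPermMatrix,
        mul_assoc]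

theorem sumZeroPermMatrix_mul (σ τ : Perm (Fin (n + 1))) :
    sumZeroPermMatrix (σ * τ) = sumZeroPermMatrix σ * (sumZeroPermMatrix τ : Matrix _ _ R) := by
  have h := blockPermMatrix_mul (R := R) σ τ
  rw [blockPermMatrix, blockPermMatrix, blockPermMatrix, ← map_mul, fromBlocks_multiply] at h
  simpa using (fromBlocks_inj.mp ((reindexAlgEquiv R R _).injective h)).1

theorem sumZeroPermMatrix_one : (sumZeroPermMatrix 1 : Matrix (Fin n) (Fin n) R) = 1 := by
  ext j k
  rw [sumZeroPermMatrix, of_apply, one_apply]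
  simp only [Perm.one_apply, stepVec, Fin.le_iff_val_le_val, Fin.val_castSucc, Fin.val_succ,
    Fin.ext_iff]
  split_ifs <;> first | (exfalso; omega) | simp

variable (R n) in
def sumZeroRep : Perm (Fin (n + 1)) →* Matrix (Fin n) (Fin n) R where
  toFun := sumZeroPermMatrix
  map_one' := sumZeroPermMatrix_one
  map_mul' := sumZeroPermMatrix_mul

theorem charpoly_sumZeroPermMatrix_mul_X_sub_one (σ : Perm (Fin (n + 1))) :
    (sumZeroPermMatrix σ : Matrix _ _ R).charpoly * (X - 1) = (σ⁻¹.permMatrix R).charpoly := by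
  have hΔ : IsUnit (diffMatrix R n) := isUnit_diffMatrix
  have hconj :
      blockPermMatrix σ = (diffMatrix R n)⁻¹ * σ⁻¹.permMatrix R * diffMatrix R n := by
    rw [mul_assoc, ← diffMatrix_mul_blockPermMatrix, ← mul_assoc,
      nonsing_inv_mul _ ((isUnit_iff_isUnit_det _).mp hΔ), one_mul]
  rw [← charpoly_units_conj' hΔ.unit, hΔ.unit_spec, ← hconj, blockPermMatrix,
    coe_reindexAlgEquiv, charpoly_reindex,
    charpoly_fromBlocks_zero₂₁, charpoly_one, Fintype.card_fin, pow_one]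

theorem charpoly_sumZeroPermMatrix_of_isCycle {σ : Perm (Fin (n + 1))} (hσ : σ.IsCycle)
    (hs : σ.support = univ) :
    (sumZeroPermMatrix σ : Matrix _ _ R).charpoly = ∑ i ∈ range (n + 1), X ^ i := by
  have h := charpoly_sumZeroPermMatrix_mul_X_sub_one (R := R) σ
  rw [hσ.inv.charpoly_permMatrix R (by rwa [Perm.support_inv]), Fintype.card_fin,
    ← geom_sum_mul] at h
  exact (monic_X_sub_C (1 : R)).isRegular.right (by simpa using h)

theorem det_one_sub_sumZeroPermMatrix_of_isCycle {σ : Perm (Fin (n + 1))} (hσ : σ.IsCycle)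
    (hs : σ.support = univ) : (1 - sumZeroPermMatrix σ : Matrix _ _ R).det = n + 1 := by
  rw [← map_one (scalar (Fin n)), ← eval_charpoly, charpoly_sumZeroPermMatrix_of_isCycle hσ hs,
    eval_geom_sum]
  simp

theorem sumZeroPermMatrix_swap (i : Fin n) :
    (sumZeroPermMatrix (swap i.castSucc i.succ) : Matrix (Fin n) (Fin n) ℂ) =
      rBurauMatrix (n + 1) 1 i := by
  ext j k
  simp only [sumZeroPermMatrix, rBurauMatrix, stepVec, of_apply, swap_apply_def]
  split_ifs <;>
    simp only [Fin.ext_iff, Fin.le_iff_val_le_val, Fin.val_castSucc, Fin.val_succ] at * <;>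
    first | (exfalso; omega) | norm_num

end SumZero

/-- **`Δ_{σ̂}(1) = 1`.** If `π_n(w)` is an `n`-cycle, then the reduced Burau
representation specialized at `q = 1` satisfies `det(I_{n−1} − β^r_{n,1}(w)) = n`. -/
theorem reduced_burau_det_at_one (n : ℕ)
    (π : FreeGroup (Fin (n - 1)) →* Equiv.Perm (Fin n))
    (hπ : ∀ i : Fin (n - 1),
      π (FreeGroup.of i) =
        Equiv.swap ⟨i, by have := i.isLt; omega⟩ ⟨(i : ℕ) + 1, by have := i.isLt; omega⟩)
    (βr : FreeGroup (Fin (n - 1)) →* GL (Fin (n - 1)) ℂ)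
    (hβr : ∀ i, (βr (FreeGroup.of i) : Matrix (Fin (n - 1)) (Fin (n - 1)) ℂ)
        = rBurauMatrix n 1 i)
    (w : FreeGroup (Fin (n - 1)))
    (hw : (π w).IsCycle ∧ (π w).support = Finset.univ) :
    ((1 : Matrix (Fin (n - 1)) (Fin (n - 1)) ℂ)
        - (βr w : Matrix (Fin (n - 1)) (Fin (n - 1)) ℂ)).det = n := by
  obtain ⟨n, rfl⟩ : ∃ m, n = m + 1 := Nat.exists_eq_succ_of_ne_zero <| by
    rintro rfl
    exact hw.1.ne_one (Subsingleton.elim _ _)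
  -- `Fin (n + 1 - 1)` is definitionally `Fin n`, and `⟨i, _⟩`, `⟨i + 1, _⟩` are `i.castSucc`,
  -- `i.succ`.
  have hβ : (Units.coeHom _).comp βr = (sumZeroRep ℂ n).comp π :=
    FreeGroup.ext_hom _ _ fun i => (hβr i).trans <| by
      rw [MonoidHom.comp_apply, hπ]
      exact (sumZeroPermMatrix_swap i).symm
  have hβw : (βr w : Matrix (Fin (n + 1 - 1)) (Fin (n + 1 - 1)) ℂ) = sumZeroPermMatrix (π w) :=
    DFunLike.congr_fun hβ w
  rw [hβw, det_one_sub_sumZeroPermMatrix_of_isCycle hw.1 hw.2, Nat.cast_succ]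
end

section
/- For every integer n ≥ 2, every q ∈ ℂ with q ≠ 0, and every s ∈ ℂ, (1 − qs) · det(I_n − s · B_1 B_2 ⋯ B_{n−1}) = (1 − s)(1 − (qs)^n). In particular the eigenvalues of the Burau matrix β_{n,q}(σ_1σ_2⋯σ_{n−1}) are 1 and qξ_n^j for j = 1, …, n−1, where ξ_n = e^{2πi/n}. -/
/-!
Every Burau matrix has all column sums equal to `1`, hence so does `P = B_1 ⋯ B_{n-1}`,
and `𝟙ᵀ (I - s P) = (1 - s) 𝟙ᵀ`. Moreover row `j ≥ 1` of `P` is `q e_{j-1}`, so `I - s P`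
has the same rows, except row `0`, as `I - q s C` for the cyclic shift `C`, whose column
sums are `1 - q s`. Replacing row `0` of either matrix by the sum of all its rows does not
change the determinant and produces the same matrix up to the scalar `1 - s`, resp.
`1 - q s`, in row `0`. Hence
`(1 - q s) det (I - s P) = (1 - s) det (I - q s C) = (1 - s) (1 - (q s) ^ n)`.
-/

open Matrix

/-- The Burau image `B_1 B_2 ⋯ B_{n−1}` of the braid `σ_1 σ_2 ⋯ σ_{n−1}`. -/
noncomputable def burauProd (n : ℕ) (q : ℂ) : Matrix (Fin n) (Fin n) ℂ :=
  ((List.finRange (n - 1)).map (burauMatrix n q)).prod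

namespace Matrix

variable {ι R : Type*} [DecidableEq ι] [CommRing R]

theorem one_sub_smul_permMatrix_apply (σ : Equiv.Perm ι) (t : R) (j : ι) :
    (1 - t • σ.permMatrix R) j = Pi.single j 1 - t • Pi.single (σ j) 1 := by
  ext k
  simp [one_apply, Pi.single_apply, PEquiv.toMatrix_apply, eq_comm]

variable [Fintype ι]

theorem vecMul_list_prod_of_forall_vecMul_eq {v : ι → R} {L : List (Matrix ι ι R)}
    (h : ∀ A ∈ L, v ᵥ* A = v) : v ᵥ* L.prod = v := by
  induction L with
  | nil => simp
  | cons A L ih =>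
    rw [List.prod_cons, ← vecMul_vecMul, h A List.mem_cons_self,
      ih fun B hB => h B (List.mem_cons_of_mem A hB)]

theorem one_vecMul_one_sub_smul {A : Matrix ι ι R} (hA : 1 ᵥ* A = 1) (t : R) :
    1 ᵥ* (1 - t • A) = (1 - t) • 1 := by
  rw [vecMul_sub, vecMul_smul, hA, vecMul_one, sub_smul, one_smul]

theorem one_vecMul_permMatrix (σ : Equiv.Perm ι) : 1 ᵥ* σ.permMatrix R = 1 := by
  rw [vecMul_permMatrix]
  rfl

theorem det_eq_mul_det_updateRow_of_vecMul_eq {M : Matrix ι ι R} {i : ι} {w u : ι → R} {a : R}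
    (hw : w i = 1) (h : w ᵥ* M = a • u) : M.det = a * (M.updateRow i u).det := by
  have := det_updateRow_sum M i w
  rw [← vecMul_eq_sum, h, hw, one_smul, det_updateRow_smul] at this
  exact this.symm

theorem mul_det_eq_mul_det_of_updateRow_eq {M N : Matrix ι ι R} {i : ι} {a b : R}
    (hMN : ∀ j, j ≠ i → M j = N j) (hM : 1 ᵥ* M = a • 1) (hN : 1 ᵥ* N = b • 1) :
    b * M.det = a * N.det := by
  have hrow : M.updateRow i 1 = N.updateRow i 1 := by
    ext j : 1
    rcases eq_or_ne j i with rfl | hj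
    · simp
    · simp [updateRow_ne hj, hMN j hj]
  rw [det_eq_mul_det_updateRow_of_vecMul_eq (Pi.one_apply i) hM,
    det_eq_mul_det_updateRow_of_vecMul_eq (Pi.one_apply i) hN, hrow]
  ring

end Matrix

section CyclicShift

variable {R : Type*} [CommRing R] {n : ℕ} (t : R)

theorem one_sub_smul_permMatrix_finRotate_inv_apply (j : Fin (n + 1)) :
    (1 - t • (finRotate (n + 1))⁻¹.permMatrix R) j
      = Pi.single j 1 - t • Pi.single (j - 1) 1 := by
  rw [one_sub_smul_permMatrix_apply, Equiv.Perm.inv_def, finRotate_symm_apply]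

-- `k ↦ t ^ (-k : Fin (n + 1))` is the row vector `(1, tⁿ, …, t², t)`.
theorem vecMul_one_sub_smul_permMatrix_finRotate_inv :
    (fun k : Fin (n + 1) => t ^ ((-k : Fin (n + 1)) : ℕ))
        ᵥ* (1 - t • (finRotate (n + 1))⁻¹.permMatrix R)
      = (1 - t ^ (n + 1)) • Pi.single 0 1 := by
  ext k
  simp only [vecMul_sub, vecMul_smul, vecMul_permMatrix, vecMul_one, Equiv.Perm.inv_def,
    Equiv.symm_symm, Pi.sub_apply, Pi.smul_apply, Function.comp_apply, finRotate_apply,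
    smul_eq_mul]
  rcases eq_or_ne k 0 with rfl | hk
  · simp [Fin.coe_neg_one, pow_succ']
  · have hk' : -k ≠ 0 := neg_ne_zero.mpr hk
    have hpos : 0 < ((-k : Fin (n + 1)) : ℕ) := Fin.pos_iff_ne_zero.mpr hk'
    rw [neg_add, ← sub_eq_add_neg, Fin.coe_sub_one, if_neg hk', ← pow_succ',
      Nat.sub_add_cancel hpos]
    simp [hk]

theorem det_updateRow_zero_one_sub_smul_permMatrix_finRotate_inv :
    ((1 - t • (finRotate (n + 1))⁻¹.permMatrix R).updateRow 0 (Pi.single 0 1)).det = 1 := by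
  have hrow := one_sub_smul_permMatrix_finRotate_inv_apply (n := n) t
  rw [det_of_isLowerTriangular]
  · refine Finset.prod_eq_one fun j _ => ?_
    rcases eq_or_ne j 0 with rfl | hj
    · simp
    · have : j - 1 ≠ j := (Fin.sub_one_lt_iff.mpr (Fin.pos_iff_ne_zero.mpr hj)).ne
      rw [updateRow_ne hj, hrow]
      simp [this.symm]
  · intro i j (hij : i < j)
    rcases eq_or_ne i 0 with rfl | hi
    · simp [hij.ne']
    · have : j ≠ i - 1 := ((Fin.sub_one_lt_iff.mpr (Fin.pos_iff_ne_zero.mpr hi)).trans hij).ne'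
      rw [updateRow_ne hi, hrow]
      simp [hij.ne', this]

theorem det_one_sub_smul_permMatrix_finRotate_inv :
    (1 - t • (finRotate (n + 1))⁻¹.permMatrix R).det = 1 - t ^ (n + 1) := by
  rw [det_eq_mul_det_updateRow_of_vecMul_eq (i := 0) (by simp)
    (vecMul_one_sub_smul_permMatrix_finRotate_inv t),
    det_updateRow_zero_one_sub_smul_permMatrix_finRotate_inv, mul_one]

end CyclicShift

section Burau

variable {n : ℕ} (q : ℂ)

theorem burauMatrix_row_of_ne (i : Fin (n - 1)) {j : Fin n} (h₀ : (j : ℕ) ≠ i)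
    (h₁ : (j : ℕ) ≠ i + 1) : burauMatrix n q i j = Pi.single j 1 := by
  ext k
  simp [burauMatrix, h₀, h₁, Pi.single_apply, eq_comm]

theorem burauMatrix_row_self (i : Fin (n - 1)) {j k : Fin n} (hj : (j : ℕ) = i)
    (hk : (k : ℕ) = i + 1) : burauMatrix n q i j = (1 - q) • Pi.single j 1 + Pi.single k 1 := by
  ext l
  simp only [burauMatrix, hj, Pi.add_apply, Pi.smul_apply, Pi.single_apply, Fin.ext_iff, hk]
  split_ifs <;> (try simp only [true_and] at *) <;> first | omega | ring1

theorem burauMatrix_row_succ (i : Fin (n - 1)) {j k : Fin n} (hj : (j : ℕ) = i + 1)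
    (hk : (k : ℕ) = i) : burauMatrix n q i j = q • Pi.single k 1 := by
  ext l
  simp only [burauMatrix, hj, Pi.smul_apply, Pi.single_apply, Fin.ext_iff, hk]
  split_ifs <;> (try simp only [true_and] at *) <;> first | omega | ring1

theorem one_vecMul_burauMatrix (i : Fin (n - 1)) : 1 ᵥ* burauMatrix n q i = 1 := by
  set a : Fin n := ⟨i, by omega⟩
  set b : Fin n := ⟨i + 1, by omega⟩
  have hab : a ≠ b := by simp [a, b, Fin.ext_iff]
  set d : Fin n → Fin n → ℂ := fun j => burauMatrix n q i j - Pi.single j 1 with hd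
  have hd_sum : ∑ j, d j = 0 := by
    rw [Fintype.sum_eq_add a b hab fun j ⟨ha, hb⟩ => by
      simp only [hd, burauMatrix_row_of_ne q i (j := j) (by simpa [Fin.ext_iff] using ha)
        (by simpa [Fin.ext_iff] using hb), sub_self]]
    simp only [hd, burauMatrix_row_self q i (j := a) (k := b) rfl rfl,
      burauMatrix_row_succ q i (j := b) (k := a) rfl rfl]
    module
  have hB (j : Fin n) : burauMatrix n q i j = d j + Pi.single j 1 := by simp [hd]
  simp only [vecMul_eq_sum, Pi.one_apply, one_smul, hB, Finset.sum_add_distrib, hd_sum, zero_add]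
  exact LinearMap.sum_single_apply (φ := fun _ : Fin n => ℂ) 1

theorem one_vecMul_burauProd : 1 ᵥ* burauProd n q = 1 :=
  vecMul_list_prod_of_forall_vecMul_eq <| by simp [one_vecMul_burauMatrix]

theorem partialProd_burauMatrix_row {j k : Fin n} (hjk : (j : ℕ) = k + 1) (m : Fin (n - 1 + 1)) :
    Fin.partialProd (burauMatrix n q) m j
      = if (j : ℕ) ≤ m then q • Pi.single k 1 else Pi.single j 1 := by
  induction m using Fin.induction with
  | zero =>
    ext l
    simp [hjk, one_eq_pi_single]
  | succ i ih =>
    rw [Fin.partialProd_succ, mul_apply_eq_vecMul, ih, Fin.val_succ, Fin.val_castSucc]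
    rcases lt_trichotomy (j : ℕ) (i + 1) with hlt | heq | hgt
    · rw [if_pos (by omega), if_pos (by omega), smul_vecMul, single_one_vecMul, row,
        burauMatrix_row_of_ne q i (by omega) (by omega)]
    · rw [if_neg (by omega), if_pos (by omega), single_one_vecMul, row,
        burauMatrix_row_succ q i (k := k) heq (by omega)]
    · rw [if_neg (by omega), if_neg (by omega), single_one_vecMul, row,
        burauMatrix_row_of_ne q i (by omega) (by omega)]

theorem burauProd_eq_partialProd :
    burauProd n q = Fin.partialProd (burauMatrix n q) (Fin.last (n - 1)) := by
  simp [burauProd, Fin.partialProd, List.ofFn_eq_map, List.take_of_length_le]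

theorem burauProd_row {j k : Fin n} (hjk : (j : ℕ) = k + 1) :
    burauProd n q j = q • Pi.single k 1 := by
  rw [burauProd_eq_partialProd, partialProd_burauMatrix_row q hjk,
    if_pos (by rw [Fin.val_last]; omega)]

end Burau

theorem burau_full_twist_charpoly_general (n : ℕ) (hn : 2 ≤ n) (q : ℂ) (s : ℂ) :
    (1 - q * s) * ((1 : Matrix (Fin n) (Fin n) ℂ) - s • burauProd n q).det
      = (1 - s) * (1 - (q * s) ^ n) := by
  obtain ⟨m, rfl⟩ : ∃ m, n = m + 1 := ⟨n - 1, by omega⟩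
  have hrows (j : Fin (m + 1)) (hj : j ≠ 0) :
      (1 - s • burauProd (m + 1) q) j
        = (1 - (q * s) • (finRotate (m + 1))⁻¹.permMatrix ℂ) j := by
    have hj' : (j : ℕ) = (j - 1 : Fin (m + 1)) + 1 := by
      rw [Fin.coe_sub_one, if_neg hj]
      have := Fin.pos_iff_ne_zero.mpr hj
      omega
    rw [one_sub_smul_permMatrix_finRotate_inv_apply]
    ext l
    simp only [Matrix.sub_apply, one_eq_pi_single, Matrix.smul_apply, burauProd_row q hj',
      Pi.smul_apply, smul_eq_mul, Pi.sub_apply]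
    ring
  rw [mul_det_eq_mul_det_of_updateRow_eq hrows
      (one_vecMul_one_sub_smul (one_vecMul_burauProd q) s)
      (one_vecMul_one_sub_smul (one_vecMul_permMatrix _) _),
    det_one_sub_smul_permMatrix_finRotate_inv]

/-- **Characteristic polynomial of `β_{n,q}(σ_1⋯σ_{n−1})`.**
`(1 − qs)·det(I_n − s·B_1⋯B_{n−1}) = (1 − s)(1 − (qs)^n)`; in particular the
eigenvalues of the Burau matrix of `σ_1⋯σ_{n−1}` are `1, qξ_n, …, qξ_n^{n−1}`. -/
theorem burau_full_twist_charpoly (n : ℕ) (hn : 2 ≤ n) (q : ℂ) (hq : q ≠ 0) (s : ℂ) :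
    (1 - q * s) * ((1 : Matrix (Fin n) (Fin n) ℂ) - s • burauProd n q).det
      = (1 - s) * (1 - (q * s) ^ n) :=
  burau_full_twist_charpoly_general n hn q s
end

section
/- Let n ≥ 2 and m ∈ ℤ with gcd(n, |m|) = 1. Then for every q ∈ ℂ with q ≠ 0, the trace of the torus type braid matrix satisfies tr(T_{n,m}) = 1 − q^m. -/
/-!
Write `P` for the permutation matrix of the cyclic shift `e_k ↦ e_{k+1}` (indices mod `n`) and
`𝟙` for the all-ones vector. Reading right multiplication by each `B_i` as a column operation gives
`B_1 ⋯ B_{n-1} = q P + (1 - q) e_1 𝟙ᵀ`. Since `𝟙ᵀ P = 𝟙ᵀ` and `𝟙ᵀ e_1 = 1`, induction on `k` gives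
`(q P + (1 - q) e_1 𝟙ᵀ) ^ k = q ^ k P ^ k + x 𝟙ᵀ` with `𝟙ᵀ x = 1 - q ^ k`, so the trace is
`q ^ k tr (P ^ k) + 1 - q ^ k`. The inverse has the same shape with `q⁻¹` and `P⁻¹`, which handles
negative exponents. Finally `tr (P ^ m)` counts the fixed points of the `m`-th power of an
`n`-cycle, and there are none when `n ∤ m`.
-/

open Matrix

/-- The torus type braid matrix `T_{n,m} = (B_1 ⋯ B_{n−1})^m`. -/
noncomputable def torusBurau (n : ℕ) (q : ℂ) (m : ℤ) : Matrix (Fin n) (Fin n) ℂ :=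
  burauProd n q ^ m

open Equiv

theorem Equiv.Perm.permMatrix_pow {ι R : Type*} [DecidableEq ι] [Fintype ι] [Semiring R]
    (σ : Perm ι) (k : ℕ) : (σ ^ k).permMatrix R = σ.permMatrix R ^ k := by
  induction k with
  | zero => simp
  | succ k ih => rw [pow_succ, permMatrix_mul, ih, pow_succ']

theorem Equiv.Perm.IsCycleOn.fixedPoints_zpow_eq_empty {α : Type*} [Fintype α] {σ : Perm α}
    (hσ : σ.IsCycleOn .univ) {m : ℤ} (hm : ¬ (Fintype.card α : ℤ) ∣ m) :
    Function.fixedPoints ⇑(σ ^ m) = ∅ := by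
  rw [← Finset.coe_univ] at hσ
  ext x
  simp only [Function.mem_fixedPoints, Function.IsFixedPt, Set.mem_empty_iff_false, iff_false]
  rwa [hσ.zpow_apply_eq (Finset.mem_univ x), Finset.card_univ]

theorem isCycleOn_finRotate_of_le {n : ℕ} (hn : 2 ≤ n) : (finRotate n).IsCycleOn Set.univ := by
  have h := (isCycle_finRotate_of_le hn).isCycleOn
  rwa [← Perm.coe_support_eq_set_support, support_finRotate_of_le hn, Finset.coe_univ] at h

namespace Matrix

variable {ι R : Type*} [Fintype ι] [DecidableEq ι]

theorem vecMul_pow_of_vecMul_eq [CommSemiring R] {P : Matrix ι ι R} {w : ι → R}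
    (hP : w ᵥ* P = w) (k : ℕ) : w ᵥ* (P ^ k) = w := by
  induction k with
  | zero => simp
  | succ k ih => rw [pow_succ, ← vecMul_vecMul, ih, hP]

theorem exists_pow_smul_add_vecMulVec [CommRing R] (q : R) {P : Matrix ι ι R} {u w : ι → R}
    (hP : w ᵥ* P = w) (hu : w ⬝ᵥ u = 1) (k : ℕ) :
    ∃ x : ι → R, (q • P + (1 - q) • vecMulVec u w) ^ k = q ^ k • P ^ k + vecMulVec x w ∧
      w ⬝ᵥ x = 1 - q ^ k := by
  induction k with
  | zero => exact ⟨0, by simp⟩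
  | succ k ih =>
    obtain ⟨x, hpow, hx⟩ := ih
    refine ⟨(q ^ k * (1 - q)) • (P ^ k *ᵥ u) + x, ?_, ?_⟩
    · have hxP : vecMulVec x w * P = vecMulVec x w := by rw [vecMulVec_mul, hP]
      have hxu : vecMulVec x w * vecMulVec u w = vecMulVec x w := by
        rw [vecMulVec_mul_vecMulVec, hu, one_smul]
      rw [pow_succ, hpow]
      simp only [add_mul, mul_add, smul_mul, Matrix.mul_smul, hxP, hxu, mul_vecMulVec, ← pow_succ,
        add_vecMulVec, smul_vecMulVec, smul_mulVec]
      module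
    · rw [dotProduct_add, dotProduct_smul, dotProduct_mulVec, vecMul_pow_of_vecMul_eq hP, hu, hx,
        smul_eq_mul]
      ring

theorem trace_pow_smul_add_vecMulVec [CommRing R] (q : R) {P : Matrix ι ι R} {u w : ι → R}
    (hP : w ᵥ* P = w) (hu : w ⬝ᵥ u = 1) (k : ℕ) :
    trace ((q • P + (1 - q) • vecMulVec u w) ^ k) = q ^ k * trace (P ^ k) + 1 - q ^ k := by
  obtain ⟨x, hpow, hx⟩ := exists_pow_smul_add_vecMulVec q hP hu k
  rw [hpow, trace_add, trace_smul, trace_vecMulVec, dotProduct_comm, hx, smul_eq_mul]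
  ring

theorem smul_add_vecMulVec_inv [Field R] {q : R} (hq : q ≠ 0) {P P' : Matrix ι ι R}
    {u w : ι → R} (hPP' : P * P' = 1) (hP : w ᵥ* P = w) (hu : w ⬝ᵥ u = 1) :
    (q • P + (1 - q) • vecMulVec u w)⁻¹ = q⁻¹ • P' + (1 - q⁻¹) • vecMulVec (P' *ᵥ u) w := by
  have hP' : w ᵥ* P' = w := by rw [← hP, vecMul_vecMul, hPP', vecMul_one, hP]
  apply inv_eq_right_inv
  have h1 : vecMulVec u w * P' = vecMulVec u w := by rw [vecMulVec_mul, hP']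
  have h2 : vecMulVec u w * vecMulVec (P' *ᵥ u) w = vecMulVec u w := by
    rw [vecMulVec_mul_vecMulVec, dotProduct_mulVec, hP', hu, one_smul]
  have h3 : P * vecMulVec (P' *ᵥ u) w = vecMulVec u w := by
    rw [mul_vecMulVec, mulVec_mulVec, hPP', one_mulVec]
  simp only [add_mul, mul_add, smul_mul, Matrix.mul_smul, hPP', h1, h2, h3, smul_smul]
  have hcoef : q⁻¹ * (1 - q) + ((1 - q⁻¹) * q + (1 - q⁻¹) * (1 - q)) = 0 := by
    field_simp
    ring
  rw [inv_mul_cancel₀ hq, one_smul, add_assoc, ← add_smul, ← add_smul, hcoef, zero_smul, add_zero]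

theorem trace_zpow_smul_permMatrix_add_vecMulVec [Field R] {q : R} (hq : q ≠ 0) (σ : Perm ι)
    {u w : ι → R} (hw : w ᵥ* σ.permMatrix R = w) (hu : w ⬝ᵥ u = 1) (m : ℤ) :
    trace ((q • σ.permMatrix R + (1 - q) • vecMulVec u w) ^ m) =
      q ^ m * (Function.fixedPoints ⇑(σ ^ m)).ncard + 1 - q ^ m := by
  obtain ⟨k, rfl | rfl⟩ := m.eq_nat_or_neg
  · rw [zpow_natCast, zpow_natCast, zpow_natCast, trace_pow_smul_add_vecMulVec q hw hu,
      ← Perm.permMatrix_pow, trace_permutation]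
  · have hinv : σ.permMatrix R * σ⁻¹.permMatrix R = 1 := by
      rw [← permMatrix_mul, inv_mul_cancel, permMatrix_one]
    have hw' : w ᵥ* σ⁻¹.permMatrix R = w := by
      rw [← hw, vecMul_vecMul, hinv, vecMul_one, hw]
    have hu' : w ⬝ᵥ (σ⁻¹.permMatrix R *ᵥ u) = 1 := by rw [dotProduct_mulVec, hw', hu]
    rw [zpow_neg_natCast, ← inv_pow', smul_add_vecMulVec_inv hq hinv hw hu,
      trace_pow_smul_add_vecMulVec q⁻¹ hw' hu', ← Perm.permMatrix_pow, trace_permutation]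
    simp only [_root_.zpow_neg, zpow_natCast, inv_pow]

end Matrix

theorem burauMatrix_succ_apply {n : ℕ} (q : ℂ) (i : Fin n) (l k : Fin (n + 1)) :
    burauMatrix (n + 1) q i l k =
      if k = i.castSucc then (if l = i.castSucc then 1 - q else if l = i.succ then q else 0)
      else if k = i.succ then (if l = i.castSucc then 1 else 0)
      else if l = k then 1 else 0 := by
  simp only [burauMatrix, Fin.ext_iff, Fin.val_castSucc, Fin.val_succ]
  split_ifs <;> first | rfl | omega

theorem mul_burauMatrix_apply {ι : Type*} {n : ℕ} (q : ℂ) (A : Matrix ι (Fin (n + 1)) ℂ)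
    (i : Fin n) (j : ι) (k : Fin (n + 1)) :
    (A * burauMatrix (n + 1) q i) j k =
      if k = i.castSucc then (1 - q) * A j i.castSucc + q * A j i.succ
      else if k = i.succ then A j i.castSucc else A j k := by
  simp only [mul_apply, burauMatrix_succ_apply]
  split_ifs
  · simp [mul_ite, Finset.sum_ite, Finset.filter_eq', Finset.filter_ne', mul_comm,
      (Fin.castSucc_lt_succ (i := i)).ne']
  · simp [mul_ite, Finset.sum_ite_eq']
  · simp [mul_ite, Finset.sum_ite_eq']

theorem partialProd_burauMatrix {n : ℕ} (q : ℂ) (r : Fin (n + 1)) :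
    Fin.partialProd (burauMatrix (n + 1) q) r = Matrix.of fun j k : Fin (n + 1) =>
      if (k : ℕ) < r then (if j = 0 then 1 - q else if (j : ℕ) = k + 1 then q else 0)
      else if (k : ℕ) = r then (if j = 0 then 1 else 0)
      else if j = k then 1 else 0 := by
  induction r using Fin.induction with
  | zero =>
    ext j k
    simp only [Fin.partialProd_zero, one_apply, of_apply, Fin.ext_iff, Fin.val_zero]
    split_ifs <;> first | rfl | omega
  | succ r ih =>
    ext j k
    rw [Fin.partialProd_succ, ih, mul_burauMatrix_apply]
    simp only [of_apply, Fin.ext_iff, Fin.val_castSucc, Fin.val_succ, Fin.val_zero]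
    split_ifs <;> first | omega | ring1

theorem burauProd_eq (n : ℕ) (q : ℂ) :
    burauProd (n + 1) q =
      q • (finRotate (n + 1))⁻¹.permMatrix ℂ + (1 - q) • vecMulVec (Pi.single 0 1) 1 := by
  have hprod : burauProd (n + 1) q = Fin.partialProd (burauMatrix (n + 1) q) (Fin.last n) := by
    simp [burauProd, Fin.partialProd, List.ofFn_eq_map, List.take_of_length_le]
  rw [hprod, partialProd_burauMatrix]
  ext j k
  simp only [of_apply, Matrix.add_apply, Matrix.smul_apply, vecMulVec_apply,
    PEquiv.toMatrix_apply, toPEquiv_apply, Option.mem_def, Option.some.injEq, Perm.inv_def,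
    symm_apply_eq, Pi.single_apply, Pi.one_apply, Fin.ext_iff, coe_finRotate, Fin.val_last,
    Fin.val_zero, smul_eq_mul]
  split_ifs <;> first | omega | ring1

/-- **Trace of the torus type braid matrix.** For `gcd(n, |m|) = 1`,
`tr(T_{n,m}) = 1 − q^m`. -/
theorem torus_braid_trace (n : ℕ) (hn : 2 ≤ n) (m : ℤ) (hnm : Nat.Coprime n m.natAbs)
    (q : ℂ) (hq : q ≠ 0) :
    (torusBurau n q m).trace = 1 - q ^ m := by
  obtain ⟨n, rfl⟩ : ∃ k, n = k + 1 := ⟨n - 1, by omega⟩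
  have hm : ¬ (Fintype.card (Fin (n + 1)) : ℤ) ∣ m := by
    rw [Fintype.card_fin, Int.natCast_dvd]
    intro h
    have h1 := hnm.eq_one_of_dvd h
    omega
  have hw : (1 : Fin (n + 1) → ℂ) ᵥ* (finRotate (n + 1))⁻¹.permMatrix ℂ = 1 := by
    rw [vecMul_permMatrix]
    rfl
  have hu : (1 : Fin (n + 1) → ℂ) ⬝ᵥ Pi.single 0 1 = 1 := by simp
  rw [torusBurau, burauProd_eq, trace_zpow_smul_permMatrix_add_vecMulVec hq _ hw hu,
    (isCycleOn_finRotate_of_le hn).inv.fixedPoints_zpow_eq_empty hm]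
  simp
end

section
/- Let n ≥ 2 and m ∈ ℤ with gcd(n, |m|) = 1. Then for every q ∈ ℂ with q ≠ 0 and every integer j ≥ 1: if n does not divide j then tr(T_{n,m}^j) = 1 − q^{mj}, and if n divides j then tr(T_{n,m}^j) = 1 + (n−1)·q^{mj}. -/
/-! The product `B_1 ⋯ B_{n-1}` equals `q C + (1 - q) e₀ 𝟙ᵀ`, with `C` the cyclic shift
`e_b ↦ e_{b+1}`. For any `P = q C + (1 - q) u vᵀ` with `vᵀ C = vᵀ` and `vᵀ u = 1` (here `v = 𝟙`,
`u = e₀`), the power `P^j` is `q^j C^j + w vᵀ` with `vᵀ w = 1 - q^j`, so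
`tr P^j = 1 - q^j + q^j tr C^j`; `P⁻¹` has the same shape with `q⁻¹`, `C⁻¹`, `C⁻¹ u`, so this holds
for all `j ∈ ℤ`. Finally `tr C^k` is `n` if `n ∣ k` and `0` otherwise, and `n ∣ m j ↔ n ∣ j` by
coprimality. -/

open Matrix

open Finset

namespace Matrix

section RankOneBlend

variable {ι : Type*} [Fintype ι] [DecidableEq ι]

def rankOneBlend {R : Type*} [CommRing R] (q : R) (C : Matrix ι ι R) (u v : ι → R) :
    Matrix ι ι R :=
  q • C + (1 - q) • vecMulVec u v

section CommRing

variable {R : Type*} [CommRing R] {C : Matrix ι ι R} {u v : ι → R}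

theorem vecMul_pow_eq_self (hv : v ᵥ* C = v) (k : ℕ) : v ᵥ* C ^ k = v := by
  induction k with
  | zero => simp
  | succ k ih => rw [pow_succ, ← vecMul_vecMul, ih, hv]

theorem rankOneBlend_pow (hv : v ᵥ* C = v) (hvu : v ⬝ᵥ u = 1) (q : R) (j : ℕ) :
    rankOneBlend q C u v ^ j =
      q ^ j • C ^ j + (1 - q) • vecMulVec (∑ k ∈ range j, q ^ k • (C ^ k *ᵥ u)) v := by
  induction j with
  | zero => simp
  | succ j ih =>
    rw [pow_succ, ih, rankOneBlend, sum_range_succ, pow_succ, pow_succ]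
    simp only [add_mul, mul_add, smul_mul_smul_comm, mul_vecMulVec, vecMulVec_mul, hv,
      vecMulVec_mulVec, hvu, MulOpposite.op_one, one_smul, add_vecMulVec, smul_vecMulVec]
    module

theorem trace_rankOneBlend_pow (hv : v ᵥ* C = v) (hvu : v ⬝ᵥ u = 1) (q : R) (j : ℕ) :
    trace (rankOneBlend q C u v ^ j) = 1 - q ^ j + q ^ j * trace (C ^ j) := by
  simp only [rankOneBlend_pow hv hvu, trace_add, trace_smul, trace_vecMulVec, dotProduct_comm _ v,
    dotProduct_sum, dotProduct_smul, dotProduct_mulVec, vecMul_pow_eq_self hv, hvu, smul_eq_mul,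
    mul_one]
  rw [← mul_neg_geom_sum]
  ring

end CommRing

section Field

variable {K : Type*} [Field K] {C : Matrix ι ι K} {u v : ι → K}

theorem rankOneBlend_inv_mul (hC : IsUnit C.det) (hv : v ᵥ* C = v) (hvu : v ⬝ᵥ u = 1)
    {q : K} (hq : q ≠ 0) :
    rankOneBlend q⁻¹ C⁻¹ (C⁻¹ *ᵥ u) v * rankOneBlend q C u v = 1 := by
  simp only [rankOneBlend, add_mul, mul_add, smul_mul_smul_comm, nonsing_inv_mul C hC,
    mul_vecMulVec, vecMulVec_mul, hv, vecMulVec_mulVec, hvu, MulOpposite.op_one, one_smul]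
  have hcoeff : q⁻¹ * (1 - q) + (1 - q⁻¹) * q + (1 - q⁻¹) * (1 - q) = 0 := by
    field_simp
    ring
  rw [inv_mul_cancel₀ hq, one_smul]
  linear_combination (norm := module) hcoeff • vecMulVec (C⁻¹ *ᵥ u) v

theorem isUnit_det_rankOneBlend (hC : IsUnit C.det) (hv : v ᵥ* C = v) (hvu : v ⬝ᵥ u = 1)
    {q : K} (hq : q ≠ 0) : IsUnit (rankOneBlend q C u v).det :=
  isUnit_det_of_left_inverse (rankOneBlend_inv_mul hC hv hvu hq)

theorem trace_rankOneBlend_zpow (hC : IsUnit C.det) (hv : v ᵥ* C = v) (hvu : v ⬝ᵥ u = 1)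
    {q : K} (hq : q ≠ 0) (z : ℤ) :
    trace (rankOneBlend q C u v ^ z) = 1 - q ^ z + q ^ z * trace (C ^ z) := by
  obtain ⟨k, rfl | rfl⟩ := Int.eq_nat_or_neg z
  · simpa only [zpow_natCast] using trace_rankOneBlend_pow hv hvu q k
  have hv' : v ᵥ* C⁻¹ = v := by
    conv_lhs => rw [← hv]
    rw [vecMul_vecMul, mul_nonsing_inv C hC, vecMul_one]
  have hvu' : v ⬝ᵥ (C⁻¹ *ᵥ u) = 1 := by rw [dotProduct_mulVec, hv', hvu]
  rw [zpow_neg_natCast, ← inv_pow', inv_eq_left_inv (rankOneBlend_inv_mul hC hv hvu hq),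
    trace_rankOneBlend_pow hv' hvu', zpow_neg_natCast, ← inv_pow', _root_.zpow_neg,
    zpow_natCast, inv_pow]

end Field

end RankOneBlend

section ShiftMatrix

variable {G R : Type*} [AddCommGroup G] [DecidableEq G]

def shiftMatrix [Zero R] [One R] (s : G) : Matrix G G R :=
  of fun a b => if a = b + s then 1 else 0

@[simp]
theorem shiftMatrix_zero [Zero R] [One R] : shiftMatrix (0 : G) = (1 : Matrix G G R) := by
  ext a b
  simp [shiftMatrix, one_apply]

variable [Fintype G]

theorem shiftMatrix_mul_shiftMatrix [Semiring R] (s t : G) :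
    shiftMatrix s * shiftMatrix t = (shiftMatrix (s + t) : Matrix G G R) := by
  ext a b
  simp [shiftMatrix, mul_apply, ← add_assoc, add_right_comm _ t]

theorem shiftMatrix_pow [Semiring R] (s : G) (k : ℕ) :
    (shiftMatrix s : Matrix G G R) ^ k = shiftMatrix (k • s) := by
  induction k with
  | zero => simp
  | succ k ih => rw [pow_succ, ih, shiftMatrix_mul_shiftMatrix, succ_nsmul]

theorem one_vecMul_shiftMatrix [Semiring R] (s : G) : (1 : G → R) ᵥ* shiftMatrix s = 1 := by
  ext b
  simp [shiftMatrix, vecMul, dotProduct]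

theorem trace_shiftMatrix [Semiring R] (s : G) :
    trace (shiftMatrix s : Matrix G G R) = if s = 0 then (Fintype.card G : R) else 0 := by
  simp [trace, shiftMatrix]

theorem shiftMatrix_neg_mul_self [Semiring R] (s : G) :
    shiftMatrix (-s) * shiftMatrix s = (1 : Matrix G G R) := by
  rw [shiftMatrix_mul_shiftMatrix, neg_add_cancel, shiftMatrix_zero]

theorem isUnit_det_shiftMatrix [CommRing R] (s : G) :
    IsUnit (shiftMatrix s : Matrix G G R).det :=
  isUnit_det_of_left_inverse (shiftMatrix_neg_mul_self s)

theorem shiftMatrix_zpow [CommRing R] (s : G) (z : ℤ) :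
    (shiftMatrix s : Matrix G G R) ^ z = shiftMatrix (z • s) := by
  obtain ⟨k, rfl | rfl⟩ := Int.eq_nat_or_neg z
  · rw [zpow_natCast, shiftMatrix_pow, natCast_zsmul]
  · rw [zpow_neg_natCast, shiftMatrix_pow, neg_smul, natCast_zsmul,
      inv_eq_left_inv (shiftMatrix_neg_mul_self _)]

end ShiftMatrix

open Fin.CommRing in
theorem trace_shiftMatrix_one_zpow {n : ℕ} [NeZero n] {R : Type*} [CommRing R] (z : ℤ) :
    trace ((shiftMatrix 1 : Matrix (Fin n) (Fin n) R) ^ z) =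
      if (n : ℤ) ∣ z then (n : R) else 0 := by
  simp only [shiftMatrix_zpow, trace_shiftMatrix, zsmul_one, CharP.intCast_eq_zero_iff (Fin n) n,
    Fintype.card_fin]

end Matrix

theorem Fin.val_add_one_eq_ite {n : ℕ} [NeZero n] (b : Fin n) :
    ((b + 1 : Fin n) : ℕ) = if (b : ℕ) + 1 = n then 0 else (b : ℕ) + 1 := by
  rw [Fin.val_add, Fin.val_one', Nat.add_mod_mod]
  split_ifs with h
  · rw [h, Nat.mod_self]
  · exact Nat.mod_eq_of_lt (by omega)

theorem List.prod_map_finRange_eq_of_mul_eq {M : Type*} [Monoid M] {N : ℕ} (f : Fin N → M)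
    (Q : ℕ → M) (h0 : Q 0 = 1) (hQ : ∀ i : Fin N, Q i * f i = Q (i + 1)) :
    ((List.finRange N).map f).prod = Q N := by
  induction N with
  | zero => simpa using h0.symm
  | succ N ih =>
    rw [List.finRange_succ_last, List.map_append, List.map_map, List.prod_append,
      ih (f ∘ Fin.castSucc) fun i => hQ i.castSucc, List.map_singleton, List.prod_singleton]
    exact hQ (Fin.last N)

theorem burauMatrix_eq_one_add_vecMulVec (n : ℕ) (q : ℂ) (i : Fin (n - 1)) (a b : Fin n)
    (ha : (a : ℕ) = i) (hb : (b : ℕ) = i + 1) :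
    burauMatrix n q i =
      1 + vecMulVec (Pi.single a 1 - Pi.single b 1) (Pi.single b 1 - q • Pi.single a 1) := by
  ext r c
  simp only [burauMatrix, Matrix.add_apply, one_apply, vecMulVec_apply, Pi.sub_apply,
    Pi.smul_apply, Pi.single_apply, Fin.ext_iff, ha, hb, smul_eq_mul]
  split_ifs <;> first | ring1 | omega

/-- `B_1 ⋯ B_k`. -/
noncomputable def burauPartialProd (n : ℕ) (q : ℂ) (k : ℕ) : Matrix (Fin n) (Fin n) ℂ :=
  of fun a b =>
    if (a : ℕ) = 0 then (if (b : ℕ) < k then 1 - q else if (b : ℕ) = k then 1 else 0)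
    else if (a : ℕ) ≤ k then (if (b : ℕ) + 1 = a then q else 0)
    else if a = b then 1 else 0

theorem burauPartialProd_zero (n : ℕ) (q : ℂ) : burauPartialProd n q 0 = 1 := by
  ext a b
  simp only [burauPartialProd, of_apply, one_apply, Fin.ext_iff]
  split_ifs <;> first | rfl | omega

theorem burauPartialProd_mul_burauMatrix (n : ℕ) (q : ℂ) (i : Fin (n - 1)) :
    burauPartialProd n q i * burauMatrix n q i = burauPartialProd n q (i + 1) := by
  rw [burauMatrix_eq_one_add_vecMulVec n q i ⟨i, by omega⟩ ⟨i + 1, by omega⟩ rfl rfl, mul_add,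
    mul_one, mul_vecMulVec]
  ext a b
  simp only [burauPartialProd, Matrix.add_apply, col, transpose_apply, of_apply, vecMulVec_apply,
    mulVec_sub, mulVec_single_one, Pi.sub_apply, Pi.smul_apply, Pi.single_apply, Fin.ext_iff,
    smul_eq_mul]
  split_ifs <;> first | ring1 | omega

theorem burauProd_eq_burauPartialProd (n : ℕ) (q : ℂ) :
    burauProd n q = burauPartialProd n q (n - 1) :=
  List.prod_map_finRange_eq_of_mul_eq _ _ (burauPartialProd_zero n q)
    (burauPartialProd_mul_burauMatrix n q)

theorem burauPartialProd_eq_rankOneBlend (n : ℕ) [NeZero n] (q : ℂ) :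
    burauPartialProd n q (n - 1) = rankOneBlend q (shiftMatrix 1) (Pi.single 0 1) 1 := by
  ext a b
  simp only [burauPartialProd, rankOneBlend, shiftMatrix, Matrix.add_apply, Matrix.smul_apply,
    of_apply, vecMulVec_apply, Pi.single_apply, Pi.one_apply, Fin.val_add_one_eq_ite, Fin.ext_iff,
    Fin.val_zero, smul_eq_mul]
  have := a.isLt
  have := b.isLt
  split_ifs <;> first | ring1 | omega

theorem burauProd_eq_rankOneBlend (n : ℕ) [NeZero n] (q : ℂ) :
    burauProd n q = rankOneBlend q (shiftMatrix 1) (Pi.single 0 1) 1 := by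
  rw [burauProd_eq_burauPartialProd, burauPartialProd_eq_rankOneBlend]

theorem trace_burauProd_zpow (n : ℕ) [NeZero n] {q : ℂ} (hq : q ≠ 0) (z : ℤ) :
    trace (burauProd n q ^ z) = 1 - q ^ z + q ^ z * if (n : ℤ) ∣ z then (n : ℂ) else 0 := by
  rw [burauProd_eq_rankOneBlend, trace_rankOneBlend_zpow (isUnit_det_shiftMatrix 1)
    (one_vecMul_shiftMatrix 1) (by simp) hq, trace_shiftMatrix_one_zpow]

theorem isUnit_det_burauProd (n : ℕ) [NeZero n] {q : ℂ} (hq : q ≠ 0) :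
    IsUnit (burauProd n q).det := by
  rw [burauProd_eq_rankOneBlend]
  exact isUnit_det_rankOneBlend (isUnit_det_shiftMatrix 1) (one_vecMul_shiftMatrix 1) (by simp) hq

theorem torus_braid_trace_pow_general (n : ℕ) (hn : 2 ≤ n) (m : ℤ) (hnm : Nat.Coprime n m.natAbs)
    (q : ℂ) (hq : q ≠ 0) (j : ℕ) :
    (¬ (n ∣ j) → (torusBurau n q m ^ j).trace = 1 - q ^ (m * j)) ∧
    ((n ∣ j) → (torusBurau n q m ^ j).trace = 1 + ((n : ℂ) - 1) * q ^ (m * j)) := by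
  have : NeZero n := ⟨by omega⟩
  have hdvd : (n : ℤ) ∣ m * j ↔ n ∣ j := by
    rw [Int.natCast_dvd, Int.natAbs_mul, Int.natAbs_natCast, hnm.dvd_mul_left]
  have htrace : (torusBurau n q m ^ j).trace =
      1 - q ^ (m * j) + q ^ (m * j) * if (n : ℤ) ∣ m * j then (n : ℂ) else 0 := by
    rw [torusBurau, ← zpow_natCast, ← Matrix.zpow_mul _ (isUnit_det_burauProd n hq),
      trace_burauProd_zpow n hq]
  constructor
  · intro h
    rw [htrace, if_neg (hdvd.not.mpr h)]
    ring
  · intro h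
    rw [htrace, if_pos (hdvd.mpr h)]
    ring

/-- **Traces of powers of the torus type braid matrix.** For `gcd(n, |m|) = 1` and `j ≥ 1`:
`tr(T_{n,m}^j) = 1 − q^{mj}` if `n ∤ j`, and `tr(T_{n,m}^j) = 1 + (n−1)q^{mj}` if `n ∣ j`. -/
theorem torus_braid_trace_pow (n : ℕ) (hn : 2 ≤ n) (m : ℤ) (hnm : Nat.Coprime n m.natAbs)
    (q : ℂ) (hq : q ≠ 0) (j : ℕ) (hj : 1 ≤ j) :
    (¬ (n ∣ j) → (torusBurau n q m ^ j).trace = 1 - q ^ (m * j)) ∧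
    ((n ∣ j) → (torusBurau n q m ^ j).trace = 1 + ((n : ℂ) - 1) * q ^ (m * j)) :=
  torus_braid_trace_pow_general n hn m hnm q hq j
end
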